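/- arXiv:2110.13743 — 5 statements merged into one kernel-verified Lean document; each statement's English description precedes it below -/
import Mathlib

section
/- Let R > 0 and let (a_{n,N})_{n,N≥0} be complex numbers such that for each n the power series T_n(z) := Σ_{N≥0} a_{n,N}·z^N converges for all z ∈ ℂ with |z| < R. Suppose that for every r₁ ∈ (0,R) one has Σ_{n≥0} sup_{|z|≤r₁} |T_n(z)| < ∞. Then for every r ∈ (0,R), Σ_{n,N≥0} |a_{n,N}|·r^N < ∞. -/
/-!
Fix `ρ` with `r < ρ < R` and let `M n` be the supremum of `|T_n|` on the closed disc of radius `ρ`.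
Cauchy's estimate gives `|a_{n,N}| ≤ M n / ρ ^ N`, so `Σ_{n,N} |a_{n,N}| r ^ N` is dominated by
`(Σ_n M n) · Σ_N (r / ρ) ^ N`, a product of a summable series and a convergent geometric series.
-/

open scoped NNReal ENNReal

open FormalMultilinearSeries Metric

namespace FormalMultilinearSeries

theorem coe_le_radius_ofScalars_of_summable {a : ℕ → ℂ} {t : ℝ≥0}
    (h : Summable fun N => a N * (t : ℂ) ^ N) : (t : ℝ≥0∞) ≤ (ofScalars ℂ a).radius := by
  refine (ofScalars ℂ a).le_radius_of_tendsto (l := 0) ?_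
  simpa [ofScalars_norm] using h.tendsto_atTop_zero.norm

theorem ofReal_le_radius_ofScalars {a : ℕ → ℂ} {R : ℝ}
    (h : ∀ z : ℂ, ‖z‖ < R → Summable fun N => a N * z ^ N) :
    ENNReal.ofReal R ≤ (ofScalars ℂ a).radius := by
  refine ENNReal.le_of_forall_nnreal_lt fun t ht => coe_le_radius_ofScalars_of_summable (h t ?_)
  simpa using ENNReal.coe_lt_ofReal.mp ht

theorem hasFPowerSeriesOnBall_ofScalars {a : ℕ → ℂ} {R : ℝ} (hR : 0 < R)
    (h : ∀ z : ℂ, ‖z‖ < R → Summable fun N => a N * z ^ N) :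
    HasFPowerSeriesOnBall (fun z => ∑' N, a N * z ^ N) (ofScalars ℂ a) 0 (ENNReal.ofReal R) := by
  have hR' : 0 < ENNReal.ofReal R := ENNReal.ofReal_pos.mpr hR
  have hrad := ofReal_le_radius_ofScalars h
  convert ((ofScalars ℂ a).hasFPowerSeriesOnBall (hR'.trans_le hrad)).mono hR' hrad using 1
  exact funext fun z => (ofScalars_sum_eq a z).symm

end FormalMultilinearSeries

theorem HasFPowerSeriesOnBall.norm_coeff_le_of_forall_mem_sphere_norm_le {f : ℂ → ℂ}
    {a : ℕ → ℂ} {c : ℂ} {r : ℝ≥0∞} {ρ C : ℝ} (hf : HasFPowerSeriesOnBall f (ofScalars ℂ a) c r)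
    (hρ : 0 < ρ) (hρr : ENNReal.ofReal ρ < r) (hC : ∀ z ∈ sphere c ρ, ‖f z‖ ≤ C) (N : ℕ) :
    ‖a N‖ ≤ C / ρ ^ N := by
  have hcoeff : a = fun n => iteratedDeriv n f c / n.factorial :=
    ofScalars_series_injective ℂ ℂ
      (hf.hasFPowerSeriesAt.eq_formalMultilinearSeries hf.analyticAt.hasFPowerSeriesAt)
  have hdiff : DiffContOnCl ℂ f (ball c ρ) := by
    refine hf.differentiableOn.diffContOnCl_ball fun z hz => ?_
    rw [Metric.mem_eball, edist_dist]
    exact (ENNReal.ofReal_le_ofReal hz).trans_lt hρr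
  have hcauchy := Complex.norm_iteratedDeriv_le_of_forall_mem_sphere_norm_le N hρ hdiff hC
  rw [hcoeff, norm_div, Complex.norm_natCast, div_le_iff₀ (by positivity)]
  rwa [div_mul_eq_mul_div, mul_comm C]

theorem summable_norm_mul_pow_of_norm_le_div_pow {E : Type*} [SeminormedAddCommGroup E]
    {a : ℕ → ℕ → E} {C : ℕ → ℝ} {r ρ : ℝ} (hC : Summable C) (hr : 0 ≤ r) (hrρ : r < ρ)
    (ha : ∀ n N, ‖a n N‖ ≤ C n / ρ ^ N) :
    Summable fun p : ℕ × ℕ => ‖a p.1 p.2‖ * r ^ p.2 := by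
  have hρ : 0 < ρ := hr.trans_lt hrρ
  have hC₀ : 0 ≤ C := fun n => (norm_nonneg _).trans (by simpa using ha n 0)
  have hgeom : Summable fun N : ℕ => (r / ρ) ^ N :=
    summable_geometric_of_lt_one (by positivity) ((div_lt_one hρ).mpr hrρ)
  refine (hC.mul_of_nonneg hgeom hC₀ fun N => by positivity).of_nonneg_of_le
    (fun _ => by positivity) fun ⟨n, N⟩ => ?_
  calc ‖a n N‖ * r ^ N ≤ C n / ρ ^ N * r ^ N := by gcongr; exact ha n N
    _ = C n * (r / ρ) ^ N := by rw [div_pow]; ring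

theorem ENNReal.norm_le_toReal_biSup {α E : Type*} [SeminormedAddCommGroup E] {f : α → E}
    {s : Set α} (h : (⨆ x ∈ s, (‖f x‖₊ : ℝ≥0∞)) ≠ ⊤) {x : α} (hx : x ∈ s) :
    ‖f x‖ ≤ (⨆ x ∈ s, (‖f x‖₊ : ℝ≥0∞)).toReal := by
  simpa using ENNReal.toReal_mono h (le_biSup (fun x => (‖f x‖₊ : ℝ≥0∞)) hx)

theorem double_seq_taylor_converse_general (R : ℝ) (a : ℕ → ℕ → ℂ)
    (hconv : ∀ n : ℕ, ∀ z : ℂ, ‖z‖ < R → Summable fun N : ℕ => a n N * z ^ N)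
    (hsup : ∀ r₁ : ℝ, 0 < r₁ → r₁ < R →
      (∑' n : ℕ, ⨆ z ∈ Metric.closedBall (0 : ℂ) r₁,
        (‖∑' N : ℕ, a n N * z ^ N‖₊ : ℝ≥0∞)) < ⊤) :
    ∀ r : ℝ, 0 < r → r < R →
      Summable fun p : ℕ × ℕ => ‖a p.1 p.2‖ * r ^ p.2 := by
  intro r hr hrR
  obtain ⟨ρ, hrρ, hρR⟩ := exists_between hrR
  have hρ : 0 < ρ := hr.trans hrρ
  have hsupρ := (hsup ρ hρ hρR).ne
  refine summable_norm_mul_pow_of_norm_le_div_pow (ENNReal.summable_toReal hsupρ) hr.le hrρ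
    fun n N => ?_
  have hT := hasFPowerSeriesOnBall_ofScalars (hρ.trans hρR) (hconv n)
  refine hT.norm_coeff_le_of_forall_mem_sphere_norm_le hρ
    ((ENNReal.ofReal_lt_ofReal_iff (hρ.trans hρR)).mpr hρR) (fun z hz => ?_) N
  exact ENNReal.norm_le_toReal_biSup (ne_top_of_le_ne_top hsupρ (ENNReal.le_tsum n))
    (sphere_subset_closedBall hz)

/-- Suppose each `T_n(z) = Σ_N a_{n,N} z^N` converges on `|z| < R` and
`Σ_n sup_{|z|≤r₁} |T_n(z)| < ∞` for every `r₁ ∈ (0,R)`. Then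
`Σ_{n,N} |a_{n,N}| r^N < ∞` for every `r ∈ (0,R)`. -/
theorem double_seq_taylor_converse (R : ℝ) (hR : 0 < R) (a : ℕ → ℕ → ℂ)
    (hconv : ∀ n : ℕ, ∀ z : ℂ, ‖z‖ < R → Summable fun N : ℕ => a n N * z ^ N)
    (hsup : ∀ r₁ : ℝ, 0 < r₁ → r₁ < R →
      (∑' n : ℕ, ⨆ z ∈ Metric.closedBall (0 : ℂ) r₁,
        (‖∑' N : ℕ, a n N * z ^ N‖₊ : ℝ≥0∞)) < ⊤) :
    ∀ r : ℝ, 0 < r → r < R →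
      Summable fun p : ℕ × ℕ => ‖a p.1 p.2‖ * r ^ p.2 :=
  double_seq_taylor_converse_general R a hconv hsup
end

section
/- Let 0 < R ≤ 1 and, for each n ∈ ℕ, let P_n be a finitely supported ℂ-valued function on compositions. Assume that for every r ∈ (0,R), Σ_{n≥0} sup_{|z|≤r} |Li_{P_n}(z)| < ∞, so that f(z) := Σ_{n≥0} Li_{P_n}(z) defines an analytic function on the disk |z| < R and f(z)/(1−z) = Σ_{N≥0} a_N·z^N there. Then for every N ∈ ℕ, the series Σ_{n≥0} H_{P_n}(N) converges absolutely and its sum equals a_N. -/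
/-!
Since `Σ_N H_s(N) z^N = Li_s(z)/(1 - z)` (a Cauchy product with the geometric series),
`H_{P_n}(N)` is the `N`-th Taylor coefficient of `Li_{P_n}(z)/(1 - z)`, which is holomorphic on
the unit disc. For `0 < r < R`, Cauchy's estimate on `|z| = r` bounds it by
`sup_{|z| ≤ r} |Li_{P_n}(z)| / ((1 - r) r^N)`, which is summable in `n` by hypothesis. This
domination lets us exchange the sums over `n` and `N` for `|z| < r`, so the `Σ_n H_{P_n}(N)`
are the Taylor coefficients of `f(z)/(1 - z)` at `0`; by uniqueness of power series they are
the `a_N`.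
-/

open scoped NNReal ENNReal

/-- A composition: a finite list of positive integers. -/
abbrev Comp := List ℕ+

/-- Harmonic sum `H_s(N) = Σ_{N ≥ n₁ > … > n_r > 0} 1/(n₁^{s₁} ⋯ n_r^{s_r})`,
with `H_ε(N) = 1`. -/
noncomputable def Hc : Comp → ℕ → ℂ
  | [], _ => 1
  | s :: u, N => ∑ n ∈ Finset.Icc 1 N, ((n : ℂ) ^ (s : ℕ))⁻¹ * Hc u (n - 1)

/-- Polylogarithm `Li_s(z) = Σ_{n₁ > … > n_r > 0} z^{n₁}/(n₁^{s₁} ⋯ n_r^{s_r})`,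
with `Li_ε = 1` (the `n = 0` term of the `tsum` vanishes since `s ≥ 1`). -/
noncomputable def LiC : Comp → ℂ → ℂ
  | [], _ => 1
  | s :: u, z => ∑' n : ℕ, z ^ n * ((n : ℂ) ^ (s : ℕ))⁻¹ * Hc u (n - 1)

/-- Weight of a composition. -/
def wt (s : Comp) : ℕ := (s.map fun p => (p : ℕ)).sum

/-- `Li_P(z) = Σ_s P(s)·Li_s(z)` for a (finitely supported) function `P` on
compositions. -/
noncomputable def LiP (P : Comp → ℂ) (z : ℂ) : ℂ := ∑' s : Comp, P s * LiC s z

/-- `H_P(N) = Σ_s P(s)·H_s(N)` for a (finitely supported) function `P` on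
compositions. -/
noncomputable def HP (P : Comp → ℂ) (N : ℕ) : ℂ := ∑' s : Comp, P s * Hc s N

/-- Weight-`n` homogeneous component of a function on compositions. -/
def homog (α : Comp → ℂ) (n : ℕ) : Comp → ℂ := fun s => if wt s = n then α s else 0

/-- `Dom_R`: the set of `α` with `Σ_n sup_{|z|≤r} |Li_{α,n}(z)| < ∞` for every
`r ∈ (0,R)`. -/
noncomputable def DomR (R : ℝ) : Set (Comp → ℂ) :=
  {α | ∀ r : ℝ, 0 < r → r < R →
    (∑' n : ℕ, ⨆ z ∈ Metric.closedBall (0 : ℂ) r, (‖LiP (homog α n) z‖₊ : ℝ≥0∞)) < ⊤}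

open FormalMultilinearSeries

theorem hasFPowerSeriesOnBall_ofScalars_of_hasSum {f : ℂ → ℂ} {c : ℕ → ℂ} {ρ : ℝ}
    (hρ : 0 < ρ) (hf : ∀ z : ℂ, ‖z‖ < ρ → HasSum (fun N => c N * z ^ N) (f z)) :
    HasFPowerSeriesOnBall f (ofScalars ℂ c) 0 (ENNReal.ofReal ρ) where
  r_le := by
    refine ENNReal.le_of_forall_nnreal_lt fun t ht => ?_
    rw [ENNReal.lt_ofReal_iff_toReal_lt (by simp), ENNReal.coe_toReal] at ht
    have ht' : ‖((t : ℝ) : ℂ)‖ < ρ := by simpa using ht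
    refine (ofScalars ℂ c).le_radius_of_tendsto (l := 0) ?_
    simpa [ofScalars_norm] using (hf _ ht').summable.tendsto_atTop_zero.norm
  r_pos := ENNReal.ofReal_pos.mpr hρ
  hasSum {y} hy := by
    rw [Metric.mem_eball, edist_zero_right, ← ofReal_norm,
      ENNReal.ofReal_lt_ofReal_iff hρ] at hy
    simp only [ofScalars_apply_eq, smul_eq_mul, zero_add]
    exact hf y hy

theorem eq_of_hasSum_mul_pow {f : ℂ → ℂ} {c c' : ℕ → ℂ} {ρ ρ' : ℝ}
    (hρ : 0 < ρ) (hρ' : 0 < ρ')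
    (hc : ∀ z : ℂ, ‖z‖ < ρ → HasSum (fun N => c N * z ^ N) (f z))
    (hc' : ∀ z : ℂ, ‖z‖ < ρ' → HasSum (fun N => c' N * z ^ N) (f z)) : c = c' :=
  ofScalars_series_injective ℂ ℂ <|
    HasFPowerSeriesAt.eq_formalMultilinearSeries
      (hasFPowerSeriesOnBall_ofScalars_of_hasSum hρ hc).hasFPowerSeriesAt
      (hasFPowerSeriesOnBall_ofScalars_of_hasSum hρ' hc').hasFPowerSeriesAt

theorem norm_coeff_le_of_hasFPowerSeriesOnBall {f : ℂ → ℂ} {c : ℕ → ℂ} {ρ : ℝ≥0∞} {r K : ℝ}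
    (hf : HasFPowerSeriesOnBall f (ofScalars ℂ c) 0 ρ) (hr : 0 < r)
    (hrρ : ENNReal.ofReal r < ρ)
    (hK : ∀ z ∈ Metric.sphere (0 : ℂ) r, ‖f z‖ ≤ K) (N : ℕ) :
    ‖c N‖ ≤ K / r ^ N := by
  have hc : c = fun n => iteratedDeriv n f 0 / n.factorial :=
    ofScalars_series_injective ℂ ℂ <|
      hf.hasFPowerSeriesAt.eq_formalMultilinearSeries hf.analyticAt.hasFPowerSeriesAt
  have hdiff : DiffContOnCl ℂ f (Metric.ball 0 r) := by
    refine hf.differentiableOn.diffContOnCl_ball fun z hz => ?_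
    rw [Metric.mem_eball, edist_zero_right]
    rw [Metric.mem_closedBall, dist_zero_right] at hz
    exact lt_of_le_of_lt (by simpa [← ofReal_norm] using ENNReal.ofReal_le_ofReal hz) hrρ
  rw [hc, norm_div, Complex.norm_natCast, div_le_iff₀ (by positivity)]
  calc ‖iteratedDeriv N f 0‖ ≤ N.factorial * K / r ^ N :=
        Complex.norm_iteratedDeriv_le_of_forall_mem_sphere_norm_le N hr hdiff hK
    _ = K / r ^ N * N.factorial := by ring

theorem hasSum_partialSums_mul_pow {𝕜 : Type*} [NormedField 𝕜] [CompleteSpace 𝕜]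
    {b : ℕ → 𝕜} {z : 𝕜} (hz : ‖z‖ < 1) (hb : Summable fun k => ‖b k * z ^ k‖) :
    HasSum (fun N => (∑ k ∈ Finset.range (N + 1), b k) * z ^ N)
      ((∑' k, b k * z ^ k) / (1 - z)) := by
  have hgeom : Summable fun k => ‖z ^ k‖ := by
    simpa only [norm_pow] using summable_geometric_of_lt_one (norm_nonneg z) hz
  have H := hasSum_sum_range_mul_of_summable_norm hb hgeom
  rw [tsum_geometric_of_norm_lt_one hz, ← div_eq_mul_inv] at H
  refine H.congr_fun fun N => ?_
  rw [Finset.sum_mul]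
  refine Finset.sum_congr rfl fun k hk => ?_
  rw [mul_assoc, ← pow_add, Nat.add_sub_cancel' (Finset.mem_range_succ_iff.mp hk)]

theorem hasSum_tsum_coeff_mul_pow {𝕜 : Type*} [NormedField 𝕜] [CompleteSpace 𝕜]
    {c : ℕ → ℕ → 𝕜} {g : ℕ → 𝕜} {M : ℕ → ℝ} {r : ℝ} {z : 𝕜} (hM : Summable M)
    (hc : ∀ n N, ‖c n N‖ ≤ M n / r ^ N) (hz : ‖z‖ < r)
    (hg : ∀ n, HasSum (fun N => c n N * z ^ N) (g n)) :
    HasSum (fun N => (∑' n, c n N) * z ^ N) (∑' n, g n) := by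
  have hr : 0 < r := (norm_nonneg z).trans_lt hz
  have hM0 : ∀ n, 0 ≤ M n := fun n => by simpa using (norm_nonneg _).trans (hc n 0)
  have hq : ‖z‖ / r < 1 := (div_lt_one hr).mpr hz
  have hprod : Summable fun p : ℕ × ℕ => ‖c p.1 p.2 * z ^ p.2‖ := by
    refine (hM.mul_of_nonneg (summable_geometric_of_lt_one (by positivity) hq) hM0
      fun _ => by positivity).of_nonneg_of_le (fun _ => norm_nonneg _) fun p => ?_
    calc ‖c p.1 p.2 * z ^ p.2‖ ≤ M p.1 / r ^ p.2 * ‖z‖ ^ p.2 := by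
          rw [norm_mul, norm_pow]; gcongr; exact hc _ _
      _ = M p.1 * (‖z‖ / r) ^ p.2 := by ring
  obtain ⟨S, hS⟩ := hprod.of_norm
  have hcN : ∀ N, Summable fun n => c n N :=
    fun N => ((hM.div_const _).of_nonneg_of_le (fun _ => norm_nonneg _) (hc · N)).of_norm
  have hgS : HasSum g S := hS.prod_fiberwise hg
  rw [hgS.tsum_eq]
  exact ((Equiv.prodComm ℕ ℕ).hasSum_iff.mpr hS).prod_fiberwise fun N =>
    (hcN N).hasSum.mul_right (z ^ N)

theorem exists_summable_bound_of_tsum_iSup_lt_top {α E : Type*} [SeminormedAddCommGroup E]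
    {f : ℕ → α → E} {s : Set α} (h : ∑' n, ⨆ x ∈ s, (‖f n x‖₊ : ℝ≥0∞) < ⊤) :
    ∃ M : ℕ → ℝ, Summable M ∧ ∀ n, ∀ x ∈ s, ‖f n x‖ ≤ M n := by
  refine ⟨fun n => (⨆ x ∈ s, (‖f n x‖₊ : ℝ≥0∞)).toReal, ENNReal.summable_toReal h.ne,
    fun n x hx => ?_⟩
  simpa using ENNReal.toReal_mono (ENNReal.ne_top_of_tsum_ne_top h.ne n)
    (le_biSup (fun x => (‖f n x‖₊ : ℝ≥0∞)) hx)

theorem norm_inv_natCast_pow_le_one (k s : ℕ) : ‖((k : ℂ) ^ s)⁻¹‖ ≤ 1 := by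
  rw [norm_inv, norm_pow, Complex.norm_natCast]
  rcases k.eq_zero_or_pos with rfl | hk
  · rcases s.eq_zero_or_pos with rfl | hs
    · simp
    · simp [zero_pow hs.ne']
  · exact inv_le_one_of_one_le₀ (one_le_pow₀ (by exact_mod_cast hk))

theorem norm_Hc_le : ∀ (s : Comp) (N : ℕ), ‖Hc s N‖ ≤ (N : ℝ) ^ s.length
  | [], N => by simp [Hc]
  | s :: u, N => by
    have hterm : ∀ n ∈ Finset.Icc 1 N,
        ‖((n : ℂ) ^ (s : ℕ))⁻¹ * Hc u (n - 1)‖ ≤ (N : ℝ) ^ u.length := by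
      intro n hn
      rw [norm_mul]
      refine (mul_le_of_le_one_left (norm_nonneg _) (norm_inv_natCast_pow_le_one n s)).trans
        ((norm_Hc_le u _).trans ?_)
      gcongr
      exact (Nat.sub_le n 1).trans (Finset.mem_Icc.mp hn).2
    calc ‖Hc (s :: u) N‖ ≤ ∑ n ∈ Finset.Icc 1 N, (N : ℝ) ^ u.length :=
          norm_sum_le_of_le _ hterm
      _ = (N : ℝ) ^ (s :: u).length := by simp [pow_succ']

theorem Hc_cons_eq_sum_range (s : ℕ+) (u : Comp) (N : ℕ) :
    Hc (s :: u) N = ∑ k ∈ Finset.range (N + 1), ((k : ℂ) ^ (s : ℕ))⁻¹ * Hc u (k - 1) := by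
  -- the extra `k = 0` term vanishes because `(0 : ℂ)⁻¹ = 0`
  rw [Finset.range_eq_Ico, Finset.sum_eq_sum_Ico_succ_bot (Nat.succ_pos N), Hc]
  simp [zero_pow s.ne_zero, Finset.Ico_add_one_right_eq_Icc]

theorem hasSum_Hc_mul_pow (s : Comp) {z : ℂ} (hz : ‖z‖ < 1) :
    HasSum (fun N => Hc s N * z ^ N) (LiC s z / (1 - z)) := by
  cases s with
  | nil => simpa [Hc, LiC, div_eq_mul_inv] using hasSum_geometric_of_norm_lt_one hz
  | cons s u =>
    have hb : Summable fun k : ℕ => ‖((k : ℂ) ^ (s : ℕ))⁻¹ * Hc u (k - 1) * z ^ k‖ := by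
      refine (summable_pow_mul_geometric_of_norm_lt_one u.length (r := ‖z‖)
        (by simpa using hz)).of_nonneg_of_le (fun _ => norm_nonneg _) fun k => ?_
      rw [norm_mul, norm_mul, norm_pow]
      gcongr
      refine (mul_le_of_le_one_left (norm_nonneg _) (norm_inv_natCast_pow_le_one k s)).trans
        ((norm_Hc_le u _).trans ?_)
      gcongr
      exact Nat.sub_le k 1
    have hLi : LiC (s :: u) z = ∑' k : ℕ, ((k : ℂ) ^ (s : ℕ))⁻¹ * Hc u (k - 1) * z ^ k :=
      tsum_congr fun k => by ring
    simp_rw [hLi, Hc_cons_eq_sum_range]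
    exact hasSum_partialSums_mul_pow hz hb

section FiniteSupport

variable (P : Comp → ℂ) (hP : (Function.support P).Finite)
include hP

theorem HP_eq_sum (N : ℕ) : HP P N = ∑ s ∈ hP.toFinset, P s * Hc s N :=
  tsum_eq_sum' <| (Function.support_mul_subset_left _ _).trans hP.coe_toFinset.ge

theorem LiP_eq_sum (z : ℂ) : LiP P z = ∑ s ∈ hP.toFinset, P s * LiC s z :=
  tsum_eq_sum' <| (Function.support_mul_subset_left _ _).trans hP.coe_toFinset.ge

theorem hasSum_HP_mul_pow {z : ℂ} (hz : ‖z‖ < 1) :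
    HasSum (fun N => HP P N * z ^ N) (LiP P z / (1 - z)) := by
  simp_rw [HP_eq_sum P hP, LiP_eq_sum P hP, Finset.sum_mul, Finset.sum_div, mul_assoc,
    mul_div_assoc]
  exact hasSum_sum fun s _ => (hasSum_Hc_mul_pow s hz).mul_left (P s)

theorem norm_HP_le {r C : ℝ} (hr0 : 0 < r) (hr1 : r < 1)
    (hC : ∀ z ∈ Metric.sphere (0 : ℂ) r, ‖LiP P z‖ ≤ C) (N : ℕ) :
    ‖HP P N‖ ≤ C / (1 - r) / r ^ N := by
  refine norm_coeff_le_of_hasFPowerSeriesOnBall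
    (hasFPowerSeriesOnBall_ofScalars_of_hasSum one_pos fun z hz => hasSum_HP_mul_pow P hP hz)
    hr0 (by simpa using hr1) (fun z hz => ?_) N
  have hLi := hC z hz
  rw [mem_sphere_zero_iff_norm] at hz
  have h1r : 1 - r ≤ ‖1 - z‖ := by simpa [hz] using norm_sub_norm_le (1 : ℂ) z
  rw [norm_div]
  exact div_le_div₀ ((norm_nonneg _).trans hLi) hLi (by linarith) h1r

end FiniteSupport

/-- Let `0 < R ≤ 1` and `(P_n)` finitely supported functions on compositions with
`Σ_n sup_{|z|≤r} |Li_{P_n}(z)| < ∞` for every `r ∈ (0,R)`, so that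
`f(z) = Σ_n Li_{P_n}(z)` is analytic on `|z| < R` with
`f(z)/(1−z) = Σ_N a_N z^N` there. Then for every `N`, `Σ_n H_{P_n}(N)` converges
absolutely with sum `a_N`. -/
theorem taylor_coeffs_of_li_family (R : ℝ) (hR0 : 0 < R) (hR1 : R ≤ 1)
    (P : ℕ → Comp → ℂ) (hfin : ∀ n : ℕ, (Function.support (P n)).Finite)
    (hdom : ∀ r : ℝ, 0 < r → r < R →
      (∑' n : ℕ, ⨆ z ∈ Metric.closedBall (0 : ℂ) r,
        (‖LiP (P n) z‖₊ : ℝ≥0∞)) < ⊤)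
    (a : ℕ → ℂ)
    (ha : ∀ z : ℂ, ‖z‖ < R →
      HasSum (fun N : ℕ => a N * z ^ N) ((∑' n : ℕ, LiP (P n) z) / (1 - z))) :
    ∀ N : ℕ, (Summable fun n : ℕ => ‖HP (P n) N‖) ∧
      ∑' n : ℕ, HP (P n) N = a N := by
  intro N
  obtain ⟨r, hr0, hrR⟩ := exists_between hR0
  have hr1 : r < 1 := hrR.trans_le hR1
  obtain ⟨M, hM, hLi⟩ := exists_summable_bound_of_tsum_iSup_lt_top (hdom r hr0 hrR)
  have hHP : ∀ n N, ‖HP (P n) N‖ ≤ M n / (1 - r) / r ^ N := fun n =>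
    norm_HP_le (P n) (hfin n) hr0 hr1 fun z hz => hLi n z (Metric.sphere_subset_closedBall hz)
  have hsum : ∀ z : ℂ, ‖z‖ < r → HasSum (fun N => (∑' n, HP (P n) N) * z ^ N)
      ((∑' n, LiP (P n) z) / (1 - z)) := fun z hz => by
    rw [← tsum_div_const]
    exact hasSum_tsum_coeff_mul_pow (hM.div_const _) hHP hz fun n =>
      hasSum_HP_mul_pow (P n) (hfin n) (hz.trans hr1)
  refine ⟨((hM.div_const _).div_const _).of_nonneg_of_le (fun _ => norm_nonneg _) (hHP · N),
    ?_⟩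
  rw [eq_of_hasSum_mul_pow hR0 hr0 ha hsum]
end

section
/- For every R ∈ (0,1], Dom_R is a unital shuffle subalgebra: the indicator function of the empty composition belongs to Dom_R; and if α, β ∈ Dom_R, then the shuffle product α ⧢ β belongs to Dom_R and Li_{α⧢β}(z) = Li_α(z)·Li_β(z) for all z ∈ ℂ with |z| < R, where Li_α(z) := Σ_{n≥0} Li_{α,n}(z). -/
open scoped NNReal ENNReal

/-- Shuffle coefficient on words over the alphabet `X = {x₀, x₁} ≃ Bool`:
`⟨u ⧢ v, w⟩`. -/
def shufW : List Bool → List Bool → List Bool → ℕ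
  | [], v, w => if w = v then 1 else 0
  | u, [], w => if w = u then 1 else 0
  | _ :: _, _ :: _, [] => 0
  | a :: u, b :: v, c :: w =>
      (if c = a then shufW u (b :: v) w else 0) +
      (if c = b then shufW (a :: u) v w else 0)
termination_by u v _ => u.length + v.length

/-- The word `π_X(s) = x₀^{s₁−1}x₁ ⋯ x₀^{s_r−1}x₁` (coding `x₀ = false`,
`x₁ = true`). -/
def piX : Comp → List Bool
  | [] => []
  | s :: u => List.replicate ((s : ℕ) - 1) false ++ true :: piX u

/-- Shuffle coefficient transported to compositions:
`(u ⧢ v)(w) = (π_X(u) ⧢ π_X(v))(π_X(w))`. -/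
def shufC (u v w : Comp) : ℕ := shufW (piX u) (piX v) (piX w)

/-- Bilinear extension of the shuffle to `ℂ`-valued functions on compositions
(a finite sum for each `w`, realized as a `tsum`). -/
noncomputable def shufA (α β : Comp → ℂ) : Comp → ℂ :=
  fun w => ∑' p : Comp × Comp, α p.1 * β p.2 * (shufC p.1 p.2 w : ℂ)

/-!
`Li_s(z)` is the sum of the power series `wordSeries (piX s)`. With `θ = z d/dz`, the series of
`x₀ w` is the solution without constant term of `θ f = f_w`, and that of `x₁ w` the one of
`θ f = z/(1-z) · f_w`. Since `θ` is a derivation and a series is determined by its constant term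
and its image under `θ`, the Leibniz rule turns the recursion defining the shuffle into
`f_u f_v = Σ_w ⟨u ⧢ v, w⟩ f_w`, by induction on `|u| + |v|`. Evaluated at `|z| < 1` this gives
`Li_u Li_v = Σ_w ⟨u ⧢ v, w⟩ Li_w`, a sum over compositions of weight `wt u + wt v`. Hence the
weight-`n` component of `Li_{α ⧢ β}` is the Cauchy convolution of those of `Li_α` and `Li_β`, and
both the bound defining `Dom_R` and the product formula follow from the Cauchy product.
-/

open Finset PowerSeries

theorem ENNReal.tsum_sum_antidiagonal_mul {A : Type*} [AddCommMonoid A] [HasAntidiagonal A]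
    (f g : A → ℝ≥0∞) :
    ∑' n, ∑ ij ∈ antidiagonal n, f ij.1 * g ij.2 = (∑' n, f n) * ∑' n, g n := by
  calc ∑' n, ∑ ij ∈ antidiagonal n, f ij.1 * g ij.2
      = ∑' x : Σ n, antidiagonal n, f x.2.val.1 * g x.2.val.2 := by
        rw [ENNReal.tsum_sigma']
        exact tsum_congr fun n => (Finset.tsum_subtype _ fun ij : A × A => f ij.1 * g ij.2).symm
    _ = ∑' p : A × A, f p.1 * g p.2 :=
        HasAntidiagonal.sigmaAntidiagonalEquivProd.tsum_eq fun p => f p.1 * g p.2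
    _ = _ := by
        rw [ENNReal.tsum_prod', ← ENNReal.tsum_mul_right]
        simp_rw [ENNReal.tsum_mul_left]

section EulerOperator

variable {K : Type*} [Field K]

noncomputable def eulerOp (R : Type*) [CommSemiring R] : Derivation R R⟦X⟧ R⟦X⟧ :=
  (X : R⟦X⟧) • derivative R

theorem coeff_eulerOp {R : Type*} [CommSemiring R] (f : R⟦X⟧) (n : ℕ) :
    coeff n (eulerOp R f) = n * coeff n f := by
  cases n with
  | zero => simp [eulerOp]
  | succ n =>
    simp only [eulerOp, Derivation.smul_apply, smul_eq_mul, coeff_succ_X_mul, coeff_derivative]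
    push_cast
    ring

theorem eq_of_eulerOp_eq [CharZero K] {f g : K⟦X⟧} (h₀ : constantCoeff f = constantCoeff g)
    (h : eulerOp K f = eulerOp K g) : f = g := by
  ext n
  cases n with
  | zero => simpa using h₀
  | succ n =>
    have hn := congrArg (coeff (n + 1)) h
    rw [coeff_eulerOp, coeff_eulerOp] at hn
    exact mul_left_cancel₀ (Nat.cast_ne_zero.2 n.succ_ne_zero) hn

noncomputable def eulerInv (f : K⟦X⟧) : K⟦X⟧ := mk fun n => (n : K)⁻¹ * coeff n f

theorem coeff_eulerInv (f : K⟦X⟧) (n : ℕ) : coeff n (eulerInv f) = (n : K)⁻¹ * coeff n f :=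
  coeff_mk _ _

theorem constantCoeff_eulerInv (f : K⟦X⟧) : constantCoeff (eulerInv f) = 0 := by
  simp [eulerInv]

theorem eulerOp_eulerInv [CharZero K] {f : K⟦X⟧} (hf : constantCoeff f = 0) :
    eulerOp K (eulerInv f) = f := by
  ext n
  rw [coeff_eulerOp, coeff_eulerInv]
  cases n with
  | zero => simpa using hf.symm
  | succ n => exact mul_inv_cancel_left₀ (Nat.cast_ne_zero.2 n.succ_ne_zero) _

end EulerOperator

-- The image of `piX`. Words ending in `x₀` must be excluded from the shuffle identity:
-- `wordSeries [false] = 0`, as `0⁻¹ = 0`.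
def NoTrailingX₀ (l : List Bool) : Prop := l.getLast? ≠ some false

theorem NoTrailingX₀.tail {a : Bool} {l : List Bool} (h : NoTrailingX₀ (a :: l)) :
    NoTrailingX₀ l := by
  cases l with
  | nil => simp [NoTrailingX₀]
  | cons b l => rwa [NoTrailingX₀, ← List.getLast?_cons_cons (a := a)]

theorem NoTrailingX₀.ne_nil_or {a : Bool} {l : List Bool} (h : NoTrailingX₀ (a :: l)) :
    l ≠ [] ∨ a = true := by
  cases l with
  | nil => cases a <;> simp_all [NoTrailingX₀]
  | cons b l => exact Or.inl (List.cons_ne_nil b l)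

theorem noTrailingX₀_cons {a : Bool} {l : List Bool} (hl : l ≠ []) :
    NoTrailingX₀ (a :: l) ↔ NoTrailingX₀ l := by
  obtain ⟨b, l, rfl⟩ := List.exists_cons_of_ne_nil hl
  rw [NoTrailingX₀, NoTrailingX₀, List.getLast?_cons_cons]

theorem shufW_nil_right (u w : List Bool) : shufW u [] w = if w = u then 1 else 0 := by
  cases u <;> simp [shufW]

theorem shufW_cons_cons_ne_zero {a b c : Bool} {u v w : List Bool}
    (h : shufW (a :: u) (b :: v) (c :: w) ≠ 0) :
    shufW u (b :: v) w ≠ 0 ∨ shufW (a :: u) v w ≠ 0 := by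
  rw [shufW] at h
  by_contra! hc
  simp [hc] at h

theorem length_of_shufW_ne_zero :
    ∀ {u v w : List Bool}, shufW u v w ≠ 0 → w.length = u.length + v.length
  | [], v, w, h => by simp_all [shufW]
  | _ :: _, [], w, h => by simp_all [shufW_nil_right]
  | _ :: _, _ :: _, [], h => by simp [shufW] at h
  | a :: u, b :: v, c :: w, h => by
    rcases shufW_cons_cons_ne_zero h with h | h <;>
    · have := length_of_shufW_ne_zero h
      simp only [List.length_cons] at this ⊢
      omega
termination_by u v => u.length + v.length

theorem NoTrailingX₀.of_shufW_ne_zero :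
    ∀ {u v w : List Bool}, shufW u v w ≠ 0 → NoTrailingX₀ u → NoTrailingX₀ v → NoTrailingX₀ w
  | [], v, w, h, _, hv => by simp_all [shufW]
  | _ :: _, [], w, h, hu, _ => by simp_all [shufW_nil_right]
  | _ :: _, _ :: _, [], h, _, _ => by simp [shufW] at h
  | a :: u, b :: v, c :: w, h, hu, hv => by
    have hw : w ≠ [] := by
      rintro rfl
      have := length_of_shufW_ne_zero h
      simp only [List.length_cons, List.length_nil] at this
      omega
    rw [noTrailingX₀_cons hw]
    rcases shufW_cons_cons_ne_zero h with h | h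
    · exact NoTrailingX₀.of_shufW_ne_zero h hu.tail hv
    · exact NoTrailingX₀.of_shufW_ne_zero h hu hv.tail
termination_by u v => u.length + v.length

noncomputable def wordsOfLength (n : ℕ) : Finset (List Bool) :=
  (List.finite_length_eq Bool n).toFinset

@[simp]
theorem mem_wordsOfLength {n : ℕ} {w : List Bool} : w ∈ wordsOfLength n ↔ w.length = n := by
  simp [wordsOfLength]

theorem sum_wordsOfLength_succ {M : Type*} [AddCommMonoid M] (n : ℕ) (F : List Bool → M) :
    ∑ w ∈ wordsOfLength (n + 1), F w = ∑ c : Bool, ∑ w ∈ wordsOfLength n, F (c :: w) := by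
  have hcons : wordsOfLength (n + 1) =
      (univ ×ˢ wordsOfLength n).image fun p : Bool × List Bool => p.1 :: p.2 := by
    ext (_ | ⟨c, w⟩) <;> simp
  rw [hcons, sum_image fun p _ q _ h => by simpa [Prod.ext_iff] using h, sum_product]

noncomputable def shuffleSum {M : Type*} [AddCommMonoid M] (F : List Bool → M)
    (u v : List Bool) : M :=
  ∑ w ∈ wordsOfLength (u.length + v.length), shufW u v w • F w

section ShuffleSum

variable {M N : Type*} [AddCommMonoid M] [AddCommMonoid N]

theorem shuffleSum_nil_left (F : List Bool → M) (v : List Bool) : shuffleSum F [] v = F v := by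
  simp [shuffleSum, shufW]

theorem shuffleSum_nil_right (F : List Bool → M) (u : List Bool) : shuffleSum F u [] = F u := by
  simp [shuffleSum, shufW_nil_right]

theorem shuffleSum_cons_cons (F : List Bool → M) (a b : Bool) (u v : List Bool) :
    shuffleSum F (a :: u) (b :: v) =
      shuffleSum (fun w => F (a :: w)) u (b :: v) +
        shuffleSum (fun w => F (b :: w)) (a :: u) v := by
  have hlen : (a :: u).length + (b :: v).length = (u.length + (b :: v).length) + 1 := by
    simp only [List.length_cons]; omega
  have hlen' : (a :: u).length + v.length = u.length + (b :: v).length := by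
    simp only [List.length_cons]; omega
  rw [shuffleSum, shuffleSum, shuffleSum, hlen, hlen', sum_wordsOfLength_succ]
  simp only [shufW, add_smul, ite_smul, zero_smul, sum_add_distrib]
  rw [sum_comm, sum_comm (s := univ)]
  simp

theorem shuffleSum_congr {F G : List Bool → M} {u v : List Bool}
    (h : ∀ w, w.length = u.length + v.length → F w = G w) : shuffleSum F u v = shuffleSum G u v :=
  sum_congr rfl fun w hw => by rw [h w (mem_wordsOfLength.1 hw)]

theorem map_shuffleSum {𝓕 : Type*} [FunLike 𝓕 M N] [AddMonoidHomClass 𝓕 M N] (φ : 𝓕)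
    (F : List Bool → M) (u v : List Bool) :
    φ (shuffleSum F u v) = shuffleSum (fun w => φ (F w)) u v := by
  simp [shuffleSum, map_sum, map_nsmul]

end ShuffleSum

noncomputable def letterSeries : Bool → ℂ⟦X⟧
  | false => 1
  | true => mk fun n => if n = 0 then 0 else 1

noncomputable def wordSeries : List Bool → ℂ⟦X⟧
  | [] => 1
  | a :: w => eulerInv (letterSeries a * wordSeries w)

theorem constantCoeff_wordSeries_cons (a : Bool) (w : List Bool) :
    constantCoeff (wordSeries (a :: w)) = 0 :=
  constantCoeff_eulerInv _

theorem eulerOp_wordSeries_cons {a : Bool} {w : List Bool} (h : w ≠ [] ∨ a = true) :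
    eulerOp ℂ (wordSeries (a :: w)) = letterSeries a * wordSeries w := by
  refine eulerOp_eulerInv ?_
  rcases h with h | rfl
  · obtain ⟨b, w, rfl⟩ := List.exists_cons_of_ne_nil h
    rw [map_mul, constantCoeff_wordSeries_cons, mul_zero]
  · simp [letterSeries]

theorem shuffleSum_eulerOp_wordSeries_cons (c : Bool) {u v : List Bool}
    (huv : u.length + v.length ≠ 0) :
    shuffleSum (fun w => eulerOp ℂ (wordSeries (c :: w))) u v =
      letterSeries c * shuffleSum wordSeries u v := by
  have hmul := map_shuffleSum (AddMonoidHom.mulLeft (letterSeries c)) wordSeries u v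
  simp only [AddMonoidHom.coe_mulLeft] at hmul
  rw [hmul]
  refine shuffleSum_congr fun w hw => eulerOp_wordSeries_cons (Or.inl ?_)
  rintro rfl
  exact huv hw.symm

theorem wordSeries_mul_wordSeries :
    ∀ {u v : List Bool}, NoTrailingX₀ u → NoTrailingX₀ v →
      wordSeries u * wordSeries v = shuffleSum wordSeries u v
  | [], v, _, _ => by rw [shuffleSum_nil_left, wordSeries, one_mul]
  | a :: u, [], _, _ => by rw [shuffleSum_nil_right, wordSeries, mul_one]
  | a :: u, b :: v, hu, hv => by
    have ihu := wordSeries_mul_wordSeries hu.tail hv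
    have ihv := wordSeries_mul_wordSeries hu hv.tail
    apply eq_of_eulerOp_eq
    · rw [shuffleSum_cons_cons, map_add, map_shuffleSum, map_shuffleSum]
      simp [constantCoeff_wordSeries_cons, shuffleSum]
    · rw [Derivation.leibniz, eulerOp_wordSeries_cons hu.ne_nil_or,
        eulerOp_wordSeries_cons hv.ne_nil_or, shuffleSum_cons_cons, map_add, map_shuffleSum,
        map_shuffleSum, shuffleSum_eulerOp_wordSeries_cons _ (by simp),
        shuffleSum_eulerOp_wordSeries_cons _ (by simp), ← ihu, ← ihv]
      simp only [smul_eq_mul]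
      ring
termination_by u v => u.length + v.length

theorem piX_cons (s : ℕ+) (u : Comp) :
    piX (s :: u) = List.replicate ((s : ℕ) - 1) false ++ true :: piX u := rfl

theorem wt_cons (s : ℕ+) (u : Comp) : wt (s :: u) = s + wt u := rfl

theorem length_piX (u : Comp) : (piX u).length = wt u := by
  induction u with
  | nil => rfl
  | cons s u ih =>
    simp only [piX_cons, wt_cons, List.length_append, List.length_replicate, List.length_cons, ih]
    have := s.pos
    omega

theorem noTrailingX₀_piX (u : Comp) : NoTrailingX₀ (piX u) := by
  induction u with
  | nil => simp [NoTrailingX₀, piX]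
  | cons s u ih =>
    rw [piX_cons, NoTrailingX₀, List.getLast?_append, List.getLast?_cons]
    cases h : (piX u).getLast? <;> simp_all [NoTrailingX₀]

theorem replicate_false_append_true_inj {m n : ℕ} {x y : List Bool}
    (h : List.replicate m false ++ true :: x = List.replicate n false ++ true :: y) :
    m = n ∧ x = y := by
  induction m generalizing n with
  | zero => cases n <;> simp_all [List.replicate_succ]
  | succ m ih =>
    cases n with
    | zero => simp [List.replicate_succ] at h
    | succ n =>
      simp only [List.replicate_succ, List.cons_append, List.cons.injEq, true_and] at h
      simpa using ih h

theorem piX_injective : Function.Injective piX := by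
  intro s
  induction s with
  | nil => rintro (_ | ⟨t, v⟩) h <;> simp_all [piX]
  | cons s u ih =>
    rintro (_ | ⟨t, v⟩) h
    · simp [piX] at h
    · obtain ⟨hst, huv⟩ := replicate_false_append_true_inj h
      have : (s : ℕ) = t := by have := s.pos; have := t.pos; omega
      rw [ih huv, PNat.coe_injective this]

theorem NoTrailingX₀.mem_range_piX : ∀ {l : List Bool}, NoTrailingX₀ l → l ∈ Set.range piX
  | [], _ => ⟨[], rfl⟩
  | true :: l, h => by
    obtain ⟨u, rfl⟩ := h.tail.mem_range_piX
    exact ⟨1 :: u, rfl⟩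
  | false :: l, h => by
    obtain ⟨_ | ⟨s, u⟩, rfl⟩ := h.tail.mem_range_piX
    · simp [NoTrailingX₀, piX] at h
    · refine ⟨(s + 1) :: u, ?_⟩
      rw [piX_cons, piX_cons, PNat.add_coe, PNat.one_coe, Nat.add_sub_cancel,
        ← Nat.sub_add_cancel s.pos, List.replicate_succ]
      simp

noncomputable def compsOfWeight (n : ℕ) : Finset Comp :=
  (wordsOfLength n).preimage piX piX_injective.injOn

@[simp]
theorem mem_compsOfWeight {n : ℕ} {s : Comp} : s ∈ compsOfWeight n ↔ wt s = n := by
  simp [compsOfWeight, length_piX]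

noncomputable def seriesEval (f : ℂ⟦X⟧) (z : ℂ) : ℂ := ∑' n, coeff n f * z ^ n

theorem seriesEval_mul {f g : ℂ⟦X⟧} {z : ℂ} (hf : Summable fun n => ‖coeff n f * z ^ n‖)
    (hg : Summable fun n => ‖coeff n g * z ^ n‖) :
    seriesEval (f * g) z = seriesEval f z * seriesEval g z := by
  rw [seriesEval, seriesEval, seriesEval,
    tsum_mul_tsum_eq_tsum_sum_antidiagonal_of_summable_norm hf hg]
  refine tsum_congr fun n => ?_
  rw [coeff_mul, sum_mul]
  refine sum_congr rfl fun ij hij => ?_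
  rw [← mem_antidiagonal.1 hij, pow_add]
  ring

theorem seriesEval_shuffleSum {F : List Bool → ℂ⟦X⟧} {z : ℂ}
    (hF : ∀ w, Summable fun n => coeff n (F w) * z ^ n) (u v : List Bool) :
    seriesEval (shuffleSum F u v) z = shuffleSum (fun w => seriesEval (F w) z) u v := by
  simp only [seriesEval, shuffleSum, map_sum, map_nsmul, sum_mul]
  simp only [nsmul_eq_mul, mul_assoc]
  rw [Summable.tsum_finsetSum fun w _ => (hF w).mul_left _]
  exact sum_congr rfl fun w _ => tsum_mul_left

theorem coeff_letterSeries_true_mul (f : ℂ⟦X⟧) (n : ℕ) :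
    coeff n (letterSeries true * f) = ∑ m ∈ range n, coeff m f := by
  rw [mul_comm, coeff_mul, Nat.sum_antidiagonal_eq_sum_range_succ
    (fun i j => coeff i f * coeff j (letterSeries true)), sum_range_succ]
  simp only [letterSeries, coeff_mk, Nat.sub_self, if_true, mul_zero, add_zero]
  exact sum_congr rfl fun m hm => by simp [Nat.sub_ne_zero_of_lt (mem_range.1 hm)]

theorem norm_coeff_wordSeries_le (w : List Bool) (n : ℕ) :
    ‖coeff n (wordSeries w)‖ ≤ (n + w.length).choose w.length := by
  induction w generalizing n with
  | nil => cases n <;> simp [wordSeries, coeff_one]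
  | cons a w ih =>
    have hρ : ∀ i, ‖coeff i (letterSeries a)‖ ≤ 1 := by
      intro i
      cases a <;> simp only [letterSeries, coeff_one, coeff_mk] <;> split_ifs <;> simp
    calc ‖coeff n (wordSeries (a :: w))‖ ≤ ‖coeff n (wordSeries w * letterSeries a)‖ := by
          rw [wordSeries, coeff_eulerInv, norm_mul, mul_comm (letterSeries a), norm_inv,
            Complex.norm_natCast]
          exact mul_le_of_le_one_left (norm_nonneg _) (Nat.cast_inv_le_one n)
      _ ≤ ∑ k ∈ range (n + 1), ((k + w.length).choose w.length : ℝ) := by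
          rw [coeff_mul, Nat.sum_antidiagonal_eq_sum_range_succ
            (fun i j => coeff i (wordSeries w) * coeff j (letterSeries a))]
          refine (norm_sum_le _ _).trans (sum_le_sum fun k _ => ?_)
          rw [norm_mul]
          exact (mul_le_of_le_one_right (norm_nonneg _) (hρ _)).trans (ih k)
      _ = _ := by
          rw [List.length_cons, ← add_assoc]
          exact_mod_cast Nat.sum_range_add_choose n w.length

theorem summable_norm_coeff_wordSeries_mul_pow (w : List Bool) {z : ℂ} (hz : ‖z‖ < 1) :
    Summable fun n => ‖coeff n (wordSeries w) * z ^ n‖ := by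
  refine .of_nonneg_of_le (fun _ => norm_nonneg _) (fun n => ?_)
    (summable_choose_mul_geometric_of_norm_lt_one w.length (r := ‖z‖) (by simpa using hz))
  rw [norm_mul, norm_pow]
  exact mul_le_mul_of_nonneg_right (norm_coeff_wordSeries_le w n) (by positivity)

theorem coeff_wordSeries_replicate_false_append (k : ℕ) (l : List Bool) (n : ℕ) :
    coeff n (wordSeries (List.replicate k false ++ l)) =
      ((n : ℂ) ^ k)⁻¹ * coeff n (wordSeries l) := by
  induction k with
  | zero => simp
  | succ k ih =>
    rw [List.replicate_succ, List.cons_append, wordSeries, coeff_eulerInv, letterSeries, one_mul,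
      ih, pow_succ, mul_inv]
    ring

theorem coeff_wordSeries_piX_cons (s : ℕ+) (u : Comp) (n : ℕ) :
    coeff n (wordSeries (piX (s :: u))) =
      ((n : ℂ) ^ (s : ℕ))⁻¹ * ∑ m ∈ range n, coeff m (wordSeries (piX u)) := by
  rw [piX_cons, coeff_wordSeries_replicate_false_append, wordSeries, coeff_eulerInv,
    coeff_letterSeries_true_mul, ← mul_assoc, ← mul_inv, ← pow_succ, Nat.sub_add_cancel s.pos]

theorem Hc_eq_sum_coeff (u : Comp) (N : ℕ) :
    Hc u N = ∑ n ∈ range (N + 1), coeff n (wordSeries (piX u)) := by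
  induction u generalizing N with
  | nil => simp [Hc, piX, wordSeries, coeff_one]
  | cons s u ih =>
    have hsub : Icc 1 N ⊆ range (N + 1) := fun n hn => by simp at hn ⊢; omega
    rw [Hc, ← sum_subset hsub fun n _ hn => ?_]
    · refine sum_congr rfl fun n hn => ?_
      obtain ⟨k, rfl⟩ : ∃ k, n = k + 1 := ⟨n - 1, by simp at hn; omega⟩
      rw [coeff_wordSeries_piX_cons, Nat.add_sub_cancel, ih]
    · obtain rfl : n = 0 := by simp at *; omega
      simp [coeff_wordSeries_piX_cons]

theorem LiC_eq_seriesEval (s : Comp) (z : ℂ) : LiC s z = seriesEval (wordSeries (piX s)) z := by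
  cases s with
  | nil => simp [LiC, seriesEval, piX, wordSeries, coeff_one]
  | cons s u =>
    refine tsum_congr fun n => ?_
    rw [coeff_wordSeries_piX_cons]
    cases n with
    | zero => simp [s.ne_zero]
    | succ n =>
      rw [Nat.add_sub_cancel, Hc_eq_sum_coeff]
      ring

theorem LiC_mul_LiC (u v : Comp) {z : ℂ} (hz : ‖z‖ < 1) :
    LiC u z * LiC v z =
      ∑ w ∈ compsOfWeight (wt u + wt v), (shufC u v w : ℂ) * LiC w z := by
  rw [LiC_eq_seriesEval, LiC_eq_seriesEval,
    ← seriesEval_mul (summable_norm_coeff_wordSeries_mul_pow _ hz)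
      (summable_norm_coeff_wordSeries_mul_pow _ hz),
    wordSeries_mul_wordSeries (noTrailingX₀_piX u) (noTrailingX₀_piX v),
    seriesEval_shuffleSum fun w => (summable_norm_coeff_wordSeries_mul_pow w hz).of_norm,
    shuffleSum, length_piX, length_piX, compsOfWeight,
    ← sum_preimage piX _ piX_injective.injOn _ fun w _ hw => ?_]
  · simp only [shufC, LiC_eq_seriesEval, nsmul_eq_mul]
  · by_contra hne
    exact hw ((noTrailingX₀_piX u).of_shufW_ne_zero (fun h => hne (by simp [h]))
      (noTrailingX₀_piX v)).mem_range_piX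

theorem LiP_homog (α : Comp → ℂ) (n : ℕ) (z : ℂ) :
    LiP (homog α n) z = ∑ s ∈ compsOfWeight n, α s * LiC s z := by
  rw [LiP, tsum_eq_sum (s := compsOfWeight n) fun s hs => by simp_all [homog]]
  exact sum_congr rfl fun s hs => by rw [homog, if_pos (mem_compsOfWeight.1 hs)]

noncomputable def pairsOfWeight (n : ℕ) : Finset (Comp × Comp) :=
  (antidiagonal n).biUnion fun ij => compsOfWeight ij.1 ×ˢ compsOfWeight ij.2

theorem mem_pairsOfWeight {n : ℕ} {p : Comp × Comp} :
    p ∈ pairsOfWeight n ↔ wt p.1 + wt p.2 = n := by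
  simp [pairsOfWeight]

theorem sum_pairsOfWeight (f g : Comp → ℂ) (n : ℕ) :
    ∑ p ∈ pairsOfWeight n, f p.1 * g p.2 =
      ∑ ij ∈ antidiagonal n, (∑ u ∈ compsOfWeight ij.1, f u) * ∑ v ∈ compsOfWeight ij.2, g v := by
  rw [pairsOfWeight, sum_biUnion fun ij _ kl _ hne => disjoint_left.2 fun p hp hp' => hne ?_]
  · exact sum_congr rfl fun ij _ => by rw [sum_product, sum_mul_sum]
  · simp only [mem_product, mem_compsOfWeight] at hp hp'
    exact Prod.ext (hp.1.symm.trans hp'.1) (hp.2.symm.trans hp'.2)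

theorem shufA_apply (α β : Comp → ℂ) (w : Comp) :
    shufA α β w = ∑ p ∈ pairsOfWeight (wt w), α p.1 * β p.2 * (shufC p.1 p.2 w : ℂ) := by
  refine tsum_eq_sum fun p hp => ?_
  have : shufC p.1 p.2 w = 0 := by
    by_contra h
    refine hp (mem_pairsOfWeight.2 ?_)
    simpa [length_piX] using (length_of_shufW_ne_zero h).symm
  simp [this]

theorem LiP_homog_shufA (α β : Comp → ℂ) (n : ℕ) {z : ℂ} (hz : ‖z‖ < 1) :
    LiP (homog (shufA α β) n) z =
      ∑ ij ∈ antidiagonal n, LiP (homog α ij.1) z * LiP (homog β ij.2) z := by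
  calc LiP (homog (shufA α β) n) z
      = ∑ w ∈ compsOfWeight n, ∑ p ∈ pairsOfWeight n,
          α p.1 * β p.2 * ((shufC p.1 p.2 w : ℂ) * LiC w z) := by
        rw [LiP_homog]
        refine sum_congr rfl fun w hw => ?_
        rw [shufA_apply, mem_compsOfWeight.1 hw, sum_mul]
        simp only [mul_assoc]
    _ = ∑ p ∈ pairsOfWeight n, (α p.1 * LiC p.1 z) * (β p.2 * LiC p.2 z) := by
        rw [sum_comm]
        refine sum_congr rfl fun p hp => ?_
        rw [← mul_sum, ← mem_pairsOfWeight.1 hp, ← LiC_mul_LiC _ _ hz]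
        ring
    _ = _ := by
        rw [sum_pairsOfWeight (fun u => α u * LiC u z) fun v => β v * LiC v z]
        simp only [LiP_homog]

noncomputable def supNormHomog (α : Comp → ℂ) (r : ℝ) (n : ℕ) : ℝ≥0∞ :=
  ⨆ z ∈ Metric.closedBall (0 : ℂ) r, (‖LiP (homog α n) z‖₊ : ℝ≥0∞)

theorem nnnorm_LiP_homog_le_supNormHomog {α : Comp → ℂ} {r : ℝ} {z : ℂ} (hz : ‖z‖ ≤ r) (n : ℕ) :
    (‖LiP (homog α n) z‖₊ : ℝ≥0∞) ≤ supNormHomog α r n :=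
  le_iSup₂ (f := fun z _ => (‖LiP (homog α n) z‖₊ : ℝ≥0∞)) z (mem_closedBall_zero_iff.2 hz)

theorem LiP_homog_unit (n : ℕ) (z : ℂ) :
    LiP (homog (fun s : Comp => if s = [] then (1 : ℂ) else 0) n) z = if n = 0 then 1 else 0 := by
  rw [LiP_homog]
  simp [ite_mul, sum_ite_eq', wt, eq_comm, LiC]

theorem unit_mem_domR (R : ℝ) : (fun s : Comp => if s = [] then (1 : ℂ) else 0) ∈ DomR R := by
  intro r _ _
  calc ∑' n, supNormHomog _ r n ≤ ∑' n : ℕ, if n = 0 then (1 : ℝ≥0∞) else 0 :=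
        ENNReal.tsum_le_tsum fun n => iSup₂_le fun z _ => by
          rw [LiP_homog_unit]
          split_ifs <;> simp
    _ = 1 := tsum_ite_eq 0 1
    _ < ⊤ := ENNReal.one_lt_top

theorem supNormHomog_shufA_le (α β : Comp → ℂ) {r : ℝ} (hr : r < 1) (n : ℕ) :
    supNormHomog (shufA α β) r n ≤
      ∑ ij ∈ antidiagonal n, supNormHomog α r ij.1 * supNormHomog β r ij.2 := by
  refine iSup₂_le fun z hz => ?_
  have hzr := mem_closedBall_zero_iff.1 hz
  rw [LiP_homog_shufA α β n (hzr.trans_lt hr)]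
  calc (‖∑ ij ∈ antidiagonal n, LiP (homog α ij.1) z * LiP (homog β ij.2) z‖₊ : ℝ≥0∞)
      ≤ ∑ ij ∈ antidiagonal n, (‖LiP (homog α ij.1) z‖₊ : ℝ≥0∞) * ‖LiP (homog β ij.2) z‖₊ := by
        simp only [← ENNReal.coe_mul, ← nnnorm_mul, ← ENNReal.ofNNReal_finsetSum]
        exact_mod_cast nnnorm_sum_le _ _
    _ ≤ _ := sum_le_sum fun ij _ => mul_le_mul' (nnnorm_LiP_homog_le_supNormHomog hzr _)
        (nnnorm_LiP_homog_le_supNormHomog hzr _)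

theorem shufA_mem_domR {R : ℝ} (hR : R ≤ 1) {α β : Comp → ℂ} (hα : α ∈ DomR R)
    (hβ : β ∈ DomR R) : shufA α β ∈ DomR R := fun r hr hrR =>
  calc ∑' n, supNormHomog (shufA α β) r n
      ≤ ∑' n, ∑ ij ∈ antidiagonal n, supNormHomog α r ij.1 * supNormHomog β r ij.2 :=
        ENNReal.tsum_le_tsum (supNormHomog_shufA_le α β (hrR.trans_le hR))
    _ = (∑' n, supNormHomog α r n) * ∑' n, supNormHomog β r n :=
        ENNReal.tsum_sum_antidiagonal_mul _ _
    _ < ⊤ := ENNReal.mul_lt_top (hα r hr hrR) (hβ r hr hrR)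

theorem summable_norm_LiP_homog {R : ℝ} {α : Comp → ℂ} (hα : α ∈ DomR R) {z : ℂ}
    (hz : ‖z‖ < R) : Summable fun n => ‖LiP (homog α n) z‖ := by
  have hfin : ∑' n, (‖LiP (homog α n) z‖₊ : ℝ≥0∞) ≠ ⊤ :=
    ((ENNReal.tsum_le_tsum fun n =>
      nnnorm_LiP_homog_le_supNormHomog (r := (‖z‖ + R) / 2) (by linarith) n).trans_lt
      (hα _ (by linarith [norm_nonneg z]) (by linarith))).ne
  exact NNReal.summable_coe.2 (ENNReal.tsum_coe_ne_top_iff_summable.1 hfin)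

theorem tsum_LiP_homog_shufA {R : ℝ} (hR : R ≤ 1) {α β : Comp → ℂ} (hα : α ∈ DomR R)
    (hβ : β ∈ DomR R) {z : ℂ} (hz : ‖z‖ < R) :
    ∑' n, LiP (homog (shufA α β) n) z =
      (∑' n, LiP (homog α n) z) * ∑' n, LiP (homog β n) z := by
  rw [tsum_mul_tsum_eq_tsum_sum_antidiagonal_of_summable_norm (summable_norm_LiP_homog hα hz)
    (summable_norm_LiP_homog hβ hz)]
  exact tsum_congr fun n => LiP_homog_shufA α β n (hz.trans_le hR)

theorem domR_shuffle_subalgebra_general (R : ℝ) (hR1 : R ≤ 1) :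
    ((fun s : Comp => if s = [] then (1 : ℂ) else 0) ∈ DomR R) ∧
    ∀ α β : Comp → ℂ, α ∈ DomR R → β ∈ DomR R →
      shufA α β ∈ DomR R ∧
      ∀ z : ℂ, ‖z‖ < R →
        (∑' n : ℕ, LiP (homog (shufA α β) n) z) =
          (∑' n : ℕ, LiP (homog α n) z) * (∑' n : ℕ, LiP (homog β n) z) :=
  ⟨unit_mem_domR R, fun _ _ hα hβ =>
    ⟨shufA_mem_domR hR1 hα hβ, fun _ hz => tsum_LiP_homog_shufA hR1 hα hβ hz⟩⟩

/-- For every `R ∈ (0,1]`, `Dom_R` is a unital shuffle subalgebra: the indicator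
of the empty composition lies in `Dom_R`, and for `α, β ∈ Dom_R` one has
`α ⧢ β ∈ Dom_R` and `Li_{α⧢β}(z) = Li_α(z)·Li_β(z)` for `|z| < R`. -/
theorem domR_shuffle_subalgebra (R : ℝ) (hR0 : 0 < R) (hR1 : R ≤ 1) :
    ((fun s : Comp => if s = [] then (1 : ℂ) else 0) ∈ DomR R) ∧
    ∀ α β : Comp → ℂ, α ∈ DomR R → β ∈ DomR R →
      shufA α β ∈ DomR R ∧
      ∀ z : ℂ, ‖z‖ < R →
        (∑' n : ℕ, LiP (homog (shufA α β) n) z) =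
          (∑' n : ℕ, LiP (homog α n) z) * (∑' n : ℕ, LiP (homog β n) z) :=
  domR_shuffle_subalgebra_general R hR1
end

section
/- For all compositions u, v and every N ∈ ℕ, H_u(N)·H_v(N) = Σ_w (u ⧛ v)(w)·H_w(N), the (finite) sum ranging over all compositions w; that is, H_• is a stuffle character: H_{u⧛v}(N) = H_u(N)·H_v(N). -/
open scoped NNReal ENNReal

/-- Stuffle coefficient on compositions: `⟨u ⧛ v, w⟩`, defined by
`u ⧛ ε = ε ⧛ u = u` and
`(s::u) ⧛ (t::v) = s::(u ⧛ (t::v)) + t::((s::u) ⧛ v) + (s+t)::(u ⧛ v)`. -/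
def stuf : Comp → Comp → Comp → ℤ
  | [], v, w => if w = v then 1 else 0
  | u, [], w => if w = u then 1 else 0
  | _ :: _, _ :: _, [] => 0
  | s :: u, t :: v, c :: w =>
      (if c = s then stuf u (t :: v) w else 0) +
      (if c = t then stuf (s :: u) v w else 0) +
      (if c = s + t then stuf u v w else 0)
termination_by u v _ => u.length + v.length

/-! Viewing `u ⧛ v` as a finitely supported function on compositions, `w ↦ H_w(N)` extends
linearly, and prepending a letter `c` acts on harmonic sums as `f ↦ Σ_{n ≤ N} n^{-c} f(n - 1)`.
Splitting the double sum `H_{s::u}(N) H_{t::v}(N)` according to whether the leading index of the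
first factor is larger than, smaller than or equal to that of the second produces exactly the
three terms of the stuffle recursion, so the identity follows by induction on `u` and `v`. -/

open Finsupp

namespace Finsupp

variable {α M : Type*} [AddCommMonoid M]

theorem mapDomain_cons_nil (a : α) (f : List α →₀ M) : mapDomain (List.cons a) f [] = 0 :=
  mapDomain_of_notMem_range f [] (by simp)

theorem mapDomain_cons_cons [DecidableEq α] (a b : α) (f : List α →₀ M) (w : List α) :
    mapDomain (List.cons a) f (b :: w) = if b = a then f w else 0 := by
  split_ifs with h
  · subst h
    exact mapDomain_apply List.cons_injective f w
  · exact mapDomain_of_notMem_range f _ (by simp [Ne.symm h])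

end Finsupp

noncomputable def stuffle : Comp → Comp → (Comp →₀ ℤ)
  | [], v => single v 1
  | u, [] => single u 1
  | s :: u, t :: v =>
      mapDomain (List.cons s) (stuffle u (t :: v)) + mapDomain (List.cons t) (stuffle (s :: u) v) +
        mapDomain (List.cons (s + t)) (stuffle u v)
termination_by u v => u.length + v.length

theorem stuffle_apply (u v w : Comp) : stuffle u v w = stuf u v w := by
  induction u, v using stuffle.induct generalizing w with
  | case1 v => simp [stuffle, stuf, single_apply, eq_comm]
  | case2 u hu =>
    obtain ⟨s, u, rfl⟩ := List.exists_cons_of_ne_nil hu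
    simp [stuffle, stuf, single_apply, eq_comm]
  | case3 s u t v ih₁ ih₂ ih₃ =>
    cases w with
    | nil => simp [stuffle, stuf, mapDomain_cons_nil]
    | cons c w =>
      rw [stuffle, stuf]
      simp only [coe_add, Pi.add_apply, mapDomain_cons_cons, ih₁, ih₂, ih₃]

theorem Hc_cons_succ (s : ℕ+) (u : Comp) (N : ℕ) :
    Hc (s :: u) (N + 1) = Hc (s :: u) N + (((N + 1 : ℕ) : ℂ) ^ (s : ℕ))⁻¹ * Hc u N := by
  rw [Hc, Hc, Finset.sum_Icc_succ_top (by omega), Nat.add_sub_cancel]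

theorem Hc_cons_mul_Hc_cons (s t : ℕ+) (u v : Comp) (N : ℕ) :
    Hc (s :: u) N * Hc (t :: v) N = ∑ n ∈ Finset.Icc 1 N,
      (((n : ℂ) ^ (s : ℕ))⁻¹ * (Hc u (n - 1) * Hc (t :: v) (n - 1))
        + ((n : ℂ) ^ (t : ℕ))⁻¹ * (Hc (s :: u) (n - 1) * Hc v (n - 1))
        + ((n : ℂ) ^ ((s + t : ℕ+) : ℕ))⁻¹ * (Hc u (n - 1) * Hc v (n - 1))) := by
  induction N with
  | zero => simp [Hc]
  | succ N ih =>
    rw [Finset.sum_Icc_succ_top (by omega), ← ih, Hc_cons_succ, Hc_cons_succ, Nat.add_sub_cancel,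
      PNat.add_coe, pow_add, mul_inv]
    ring

theorem linearCombination_Hc_mapDomain_cons (c : ℕ+) (f : Comp →₀ ℤ) (N : ℕ) :
    linearCombination ℤ (Hc · N) (mapDomain (List.cons c) f) =
      ∑ n ∈ Finset.Icc 1 N, ((n : ℂ) ^ (c : ℕ))⁻¹ * linearCombination ℤ (Hc · (n - 1)) f := by
  rw [linearCombination_mapDomain]
  simp only [linearCombination_apply, Finsupp.sum, Function.comp_apply, Hc, Finset.smul_sum,
    Finset.mul_sum, mul_smul_comm]
  exact Finset.sum_comm

theorem linearCombination_Hc_stuffle (u v : Comp) (N : ℕ) :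
    linearCombination ℤ (Hc · N) (stuffle u v) = Hc u N * Hc v N := by
  induction u, v using stuffle.induct generalizing N with
  | case1 v => simp [stuffle, Hc]
  | case2 u _ => simp [stuffle, Hc]
  | case3 s u t v ih₁ ih₂ ih₃ =>
    simp only [stuffle, map_add, linearCombination_Hc_mapDomain_cons, ih₁, ih₂, ih₃,
      ← Finset.sum_add_distrib, Hc_cons_mul_Hc_cons]

/-- `H_•` is a stuffle character: for all compositions `u, v` and every `N`,
`H_u(N)·H_v(N) = Σ_w (u ⧛ v)(w)·H_w(N)` (a finite sum over compositions,
realized as a `tsum`). -/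
theorem harmonic_stuffle_character (u v : Comp) (N : ℕ) :
    Hc u N * Hc v N = ∑' w : Comp, (stuf u v w : ℂ) * Hc w N := by
  have hsupp : ∀ w ∉ (stuffle u v).support, (stuf u v w : ℂ) * Hc w N = 0 := fun w hw => by
    simp [← stuffle_apply, notMem_support_iff.mp hw]
  rw [tsum_eq_sum hsupp, ← linearCombination_Hc_stuffle, linearCombination_apply, Finsupp.sum]
  simp [stuffle_apply, zsmul_eq_mul]
end

section
/- Let (α_n)_{n≥1} and (β_n)_{n≥1} be complex numbers. Define the Kleene star A* of the degree-one series A = Σ_{n≥1} α_n y_n as the ℂ-valued function on compositions with A*((s₁,…,s_r)) = α_{s₁}⋯α_{s_r} (and A*(ε) = 1), and likewise B* from (β_n). Then A* ⧛ B* = C*, where C* is the Kleene star built from the coefficients c_n := α_n + β_n + Σ_{i+j=n, i,j≥1} α_i β_j; explicitly, for every composition w = (s₁,…,s_r): (A* ⧛ B*)(w) = ∏_{i=1}^{r} ( α_{s_i} + β_{s_i} + Σ_{p+q=s_i, p,q≥1} α_p β_q ). -/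
open scoped NNReal ENNReal

/-- Bilinear extension of the stuffle to `ℂ`-valued functions on compositions
(a finite sum for each `w`, realized as a `tsum`). -/
noncomputable def stufA (α β : Comp → ℂ) : Comp → ℂ :=
  fun w => ∑' p : Comp × Comp, α p.1 * β p.2 * (stuf p.1 p.2 w : ℂ)

/-- The Kleene star of the degree-one series `Σ_{n≥1} α_n y_n`:
`A*((s₁,…,s_r)) = α_{s₁} ⋯ α_{s_r}`, `A*(ε) = 1`. -/
noncomputable def star (α : ℕ → ℂ) : Comp → ℂ :=
  fun s => (s.map fun p => α (p : ℕ)).prod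

/-!
Reading off the first letter `n` of `w`, the stuffle coefficient satisfies
`⟨u ⧛ v, n w⟩ = [u = n u'] ⟨u' ⧛ v, w⟩ + [v = n v'] ⟨u ⧛ v', w⟩`
`               + Σ_{s+t=n} [u = s u', v = t v'] ⟨u' ⧛ v', w⟩`
for all `u, v`, empty ones included. Summing against `A(u) B(v)` gives
`(A ⧛ B)(n w) = (n⁻¹A ⧛ B)(w) + (A ⧛ n⁻¹B)(w) + Σ_{s+t=n} (s⁻¹A ⧛ t⁻¹B)(w)`
with the left residuals `s⁻¹A(u) = A(s u)`. For Kleene stars `s⁻¹A* = α_s A*`, so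
`(A* ⧛ B*)(n w) = c_n (A* ⧛ B*)(w)`.
-/

open Finset

def weight (u : Comp) : ℕ := (u.map fun s : ℕ+ => (s : ℕ)).sum

@[simp] lemma weight_nil : weight [] = 0 := rfl

@[simp] lemma weight_cons (s : ℕ+) (u : Comp) : weight (s :: u) = s + weight u := by
  simp [weight]

lemma finite_setOf_weight_le : ∀ n : ℕ, {u : Comp | weight u ≤ n}.Finite
  | 0 => (Set.finite_singleton []).subset fun u hu => by
      cases u with
      | nil => rfl
      | cons s u => simp at hu
  | n + 1 =>
    have hs : {s : ℕ+ | (s : ℕ) ≤ n + 1}.Finite :=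
      (Set.finite_le_nat (n + 1)).preimage PNat.coe_injective.injOn
    ((hs.image2 List.cons (finite_setOf_weight_le n)).insert []).subset fun u hu => by
      cases u with
      | nil => exact Set.mem_insert _ _
      | cons s u =>
        have := s.pos
        simp only [Set.mem_ofPred_eq, weight_cons] at hu
        exact Set.mem_insert_of_mem _ (Set.mem_image2_of_mem (by simp; omega) (by simp; omega))

lemma PNat.eq_add_iff_lt_and_sub_eq {c s t : ℕ+} : c = s + t ↔ s < c ∧ c - s = t := by
  constructor
  · rintro rfl
    exact ⟨s.lt_add_right t, by rw [add_comm, PNat.add_sub]⟩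
  · rintro ⟨h, rfl⟩
    exact (PNat.add_sub_of_lt h).symm

lemma sum_Ico_pnat_sub {M : Type*} [AddCommMonoid M] (f : ℕ → ℕ → M) (c : ℕ+) :
    ∑ s ∈ Ico 1 c, f s ↑(c - s) = ∑ i ∈ Ico 1 (c : ℕ), f i (c - i) := by
  calc ∑ s ∈ Ico 1 c, f s ↑(c - s) = ∑ s ∈ Ico 1 c, f s (c - s) :=
        sum_congr rfl fun s hs => by rw [PNat.sub_coe, if_pos (mem_Ico.mp hs).2]
    _ = ∑ i ∈ (Ico 1 c).map (.subtype _), f i (c - i) :=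
        (sum_map (Ico 1 c) (.subtype fun n : ℕ => 0 < n) fun i => f i (c - i)).symm
    _ = ∑ i ∈ Ico 1 (c : ℕ), f i (c - i) := by rw [PNat.map_subtype_embedding_Ico]; rfl

lemma stuf_nil_right (u w : Comp) : stuf u [] w = if w = u then 1 else 0 := by
  cases u <;> simp [stuf]

lemma stuf_at_nil (u v : Comp) : stuf u v [] = if u = [] ∧ v = [] then 1 else 0 := by
  cases u <;> cases v <;> simp [stuf, eq_comm]

lemma stuf_at_cons (u v : Comp) (c : ℕ+) (w : Comp) :
    stuf u v (c :: w) =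
      (if [c] <+: u then stuf u.tail v w else 0) + (if [c] <+: v then stuf u v.tail w else 0) +
        ∑ s ∈ Ico 1 c, if [s] <+: u ∧ [c - s] <+: v then stuf u.tail v.tail w else 0 := by
  cases u <;> cases v <;> simp [stuf, stuf_nil_right, ite_and, PNat.eq_add_iff_lt_and_sub_eq]

lemma stuf_eq_zero_of_weight_ne {u v w : Comp} (h : weight u + weight v ≠ weight w) :
    stuf u v w = 0 := by
  induction u, v, w using stuf.induct with
  | case1 => simp at h
  | case2 v w hne => simp [stuf, hne]
  | case3 => simp at h
  | case4 u w _ hne => cases u <;> simp_all [stuf]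
  | case5 => simp [stuf]
  | case6 s u t v c w ih₁ ih₂ ih₃ =>
    simp only [weight_cons] at h ih₁ ih₂ ih₃
    rw [stuf, ite_eq_right_iff.mpr fun hc => ih₁ ?_, ite_eq_right_iff.mpr fun hc => ih₂ ?_,
      ite_eq_right_iff.mpr fun hc => ih₃ ?_, add_zero, add_zero]
    all_goals subst hc; push_cast at h; omega

lemma hasSum_stufA (A B : Comp → ℂ) (w : Comp) :
    HasSum (fun p : Comp × Comp => A p.1 * B p.2 * stuf p.1 p.2 w) (stufA A B w) := by
  refine (summable_of_hasFiniteSupport (((finite_setOf_weight_le (weight w)).prod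
    (finite_setOf_weight_le (weight w))).subset fun p hp => ?_)).hasSum
  have h : weight p.1 + weight p.2 = weight w := by
    by_contra hne
    simp [stuf_eq_zero_of_weight_ne hne] at hp
  exact ⟨by simp; omega, by simp; omega⟩

lemma hasSum_stufA_append (A B : Comp → ℂ) (x y w : Comp) :
    HasSum (fun p : Comp × Comp => if x <+: p.1 ∧ y <+: p.2 then
        A p.1 * B p.2 * stuf (p.1.drop x.length) (p.2.drop y.length) w else 0)
      (stufA (fun u => A (x ++ u)) (fun v => B (y ++ v)) w) := by
  let e : Comp × Comp → Comp × Comp := fun p => (x ++ p.1, y ++ p.2)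
  have he : e.Injective := fun p q h => by
    simpa [e, Prod.ext_iff] using h
  rw [← he.hasSum_iff]
  · convert hasSum_stufA (fun u => A (x ++ u)) (fun v => B (y ++ v)) w using 1
    funext p
    simp [e]
  · rintro p hp
    rw [if_neg]
    rintro ⟨hx, hy⟩
    exact hp ⟨(p.1.drop x.length, p.2.drop y.length), by
      simp [e, List.prefix_iff_eq_append.mp hx, List.prefix_iff_eq_append.mp hy]⟩

lemma stufA_at_nil (A B : Comp → ℂ) : stufA A B [] = A [] * B [] := by
  rw [stufA, tsum_eq_single ([], [])]
  · simp [stuf_at_nil]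
  · rintro ⟨u, v⟩ huv
    simp_all [stuf_at_nil]

lemma stufA_at_cons (A B : Comp → ℂ) (c : ℕ+) (w : Comp) :
    stufA A B (c :: w) =
      stufA (fun u => A (c :: u)) B w + stufA A (fun v => B (c :: v)) w +
        ∑ s ∈ Ico 1 c, stufA (fun u => A (s :: u)) (fun v => B ((c - s) :: v)) w := by
  have h₁ := hasSum_stufA_append A B [c] [] w
  have h₂ := hasSum_stufA_append A B [] [c] w
  have h₃ := hasSum_sum fun s (_ : s ∈ Ico 1 c) => hasSum_stufA_append A B [s] [c - s] w
  simp only [List.singleton_append, List.nil_append, List.nil_prefix, and_true, true_and,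
    List.length_singleton, List.length_nil, List.drop_zero, List.drop_one] at h₁ h₂ h₃
  refine (hasSum_stufA A B (c :: w)).unique ?_
  convert (h₁.add h₂).add h₃ using 1
  funext p
  simp only [stuf_at_cons, Int.cast_add, Int.cast_sum, Int.cast_ite, Int.cast_zero, mul_add,
    mul_sum, mul_ite, mul_zero]

lemma stufA_const_mul_left (a : ℂ) (A B : Comp → ℂ) (w : Comp) :
    stufA (fun u => a * A u) B w = a * stufA A B w := by
  simp only [stufA, mul_assoc, tsum_mul_left]

lemma stufA_const_mul_right (b : ℂ) (A B : Comp → ℂ) (w : Comp) :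
    stufA A (fun v => b * B v) w = b * stufA A B w := by
  simp only [stufA, ← tsum_mul_left]
  congr 1 with p
  ring

@[simp] lemma star_nil (α : ℕ → ℂ) : star α [] = 1 := rfl

@[simp] lemma star_cons (α : ℕ → ℂ) (s : ℕ+) (u : Comp) :
    star α (s :: u) = α s * star α u := by
  simp [_root_.star]

/-- Stuffle of Kleene stars of degree-one series:
`A* ⧛ B* = C*` with `c_n = α_n + β_n + Σ_{i+j=n, i,j≥1} α_i β_j`. -/
theorem stuffle_of_kleene_stars (α β : ℕ → ℂ) (w : Comp) :
    stufA (star α) (star β) w =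
      (w.map fun p =>
        α (p : ℕ) + β (p : ℕ) +
          ∑ i ∈ Finset.Ico 1 (p : ℕ), α i * β ((p : ℕ) - i)).prod := by
  -- `w.map` in the statement runs over `w` coerced to `List ℕ` through the list monad
  simp only [List.pure_def, List.bind_eq_flatMap]
  induction w with
  | nil => simp [stufA_at_nil]
  | cons c w ih =>
    rw [stufA_at_cons, List.flatMap_cons, List.singleton_append, List.map_cons, List.prod_cons,
      ← ih, ← sum_Ico_pnat_sub fun i j => α i * β j]
    simp only [star_cons, stufA_const_mul_left, stufA_const_mul_right, add_mul, sum_mul]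
    exact congrArg _ (sum_congr rfl fun s _ => by ring)
end
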